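/- arXiv:math/0605378 — 2 statements merged into one kernel-verified Lean document; each statement's English description precedes it below -/
import Mathlib

section
/- Let u : ℝ^N → ℂ be smooth and radially symmetric, and let 𝒞 = {D ≤ |x| ≤ 2D}. If x₀ ∈ 𝒞 attains the maximum of |u| on 𝒞 and there exists y ∈ 𝒞 with |u(y)| ≤ |u(x₀)|/2, then ‖u‖_{L^∞(𝒞)}^2 ≤ C D^{-(N-1)} ‖∇u‖_{L^2(𝒞)} ‖u‖_{L^2(𝒞)} for a universal constant C depending only on N. -/
open MeasureTheory Set Metric

lemma radial_fderiv_norm_le {E : Type*} [NormedAddCommGroup E] [InnerProductSpace ℝ E]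
    [FiniteDimensional ℝ E] (u : E → ℂ) (hu : Differentiable ℝ u)
    (hrad : ∀ x y : E, ‖x‖ = ‖y‖ → u x = u y) {x y : E} (h : ‖x‖ = ‖y‖) :
    ‖fderiv ℝ u x‖ ≤ ‖fderiv ℝ u y‖ := by
  set R := Submodule.reflection (Submodule.span ℝ {x - y})ᗮ with hRdef
  have hRx : R x = y := Submodule.reflection_sub h
  have hcomp : u ∘ R = u := funext fun z => hrad (R z) z (R.norm_map z)
  have h1 := ((hu (R x)).hasFDerivAt.comp x R.hasFDerivAt)
  rw [hcomp] at h1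
  have hfd := h1.fderiv
  have hRnorm : ‖(R : E →L[ℝ] E)‖ ≤ 1 :=
    ContinuousLinearMap.opNorm_le_bound _ zero_le_one fun z => by simp
  calc ‖fderiv ℝ u x‖ = ‖(fderiv ℝ u (R x)).comp (R : E →L[ℝ] E)‖ := by rw [hfd]
    _ ≤ ‖fderiv ℝ u (R x)‖ * ‖(R : E →L[ℝ] E)‖ := ContinuousLinearMap.opNorm_comp_le _ _
    _ ≤ ‖fderiv ℝ u (R x)‖ * 1 := by gcongr
    _ = ‖fderiv ℝ u y‖ := by rw [mul_one, hRx]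

lemma radial_fderiv_norm {E : Type*} [NormedAddCommGroup E] [InnerProductSpace ℝ E]
    [FiniteDimensional ℝ E] (u : E → ℂ) (hu : Differentiable ℝ u)
    (hrad : ∀ x y : E, ‖x‖ = ‖y‖ → u x = u y) {x y : E} (h : ‖x‖ = ‖y‖) :
    ‖fderiv ℝ u x‖ = ‖fderiv ℝ u y‖ :=
  le_antisymm (radial_fderiv_norm_le u hu hrad h) (radial_fderiv_norm_le u hu hrad h.symm)

lemma polar_annulus (N : ℕ) (hN : 3 ≤ N) (D : ℝ) (hD : 0 < D) (φ : ℝ → ℝ) :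
    ∫ x in {x : EuclideanSpace ℝ (Fin N) | D ≤ ‖x‖ ∧ ‖x‖ ≤ 2 * D}, φ ‖x‖ =
      (N * (volume (Metric.ball (0 : EuclideanSpace ℝ (Fin N)) 1)).toReal) *
        ∫ r in Set.Ioc D (2 * D), r ^ (N - 1) * φ r := by
  haveI : Nontrivial (EuclideanSpace ℝ (Fin N)) :=
    Module.nontrivial_of_finrank_pos (R := ℝ)
      (by rw [finrank_euclideanSpace_fin]; omega)
  have hdim : Module.finrank ℝ (EuclideanSpace ℝ (Fin N)) = N := finrank_euclideanSpace_fin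
  have hset : {x : EuclideanSpace ℝ (Fin N) | D ≤ ‖x‖ ∧ ‖x‖ ≤ 2 * D} =
      (fun x : EuclideanSpace ℝ (Fin N) => ‖x‖) ⁻¹' Set.Icc D (2 * D) := rfl
  have hmeas : MeasurableSet {x : EuclideanSpace ℝ (Fin N) | D ≤ ‖x‖ ∧ ‖x‖ ≤ 2 * D} := by
    rw [hset]; exact measurable_norm measurableSet_Icc
  have key := MeasureTheory.integral_fun_norm_addHaar
    (volume : Measure (EuclideanSpace ℝ (Fin N))) ((Set.Icc D (2 * D)).indicator φ)
  rw [hdim] at key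
  have h1 : ∫ x in {x : EuclideanSpace ℝ (Fin N) | D ≤ ‖x‖ ∧ ‖x‖ ≤ 2 * D}, φ ‖x‖ =
      ∫ x : EuclideanSpace ℝ (Fin N), ((Set.Icc D (2 * D)).indicator φ) ‖x‖ := by
    rw [← integral_indicator hmeas]
    congr 1
  rw [h1, key, nsmul_eq_mul, smul_eq_mul, ← mul_assoc]
  congr 1
  have h2 : ∀ r : ℝ, r ^ (N - 1) • ((Set.Icc D (2 * D)).indicator φ) r =
      (Set.Icc D (2 * D)).indicator (fun r => r ^ (N - 1) * φ r) r := by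
    intro r
    by_cases hr : r ∈ Set.Icc D (2 * D) <;> simp [Set.indicator, hr]
  rw [show (∫ y in Set.Ioi (0:ℝ), y ^ (N - 1) • ((Set.Icc D (2 * D)).indicator φ) y) =
      ∫ y in Set.Ioi (0:ℝ), (Set.Icc D (2 * D)).indicator (fun r => r ^ (N - 1) * φ r) y from
      integral_congr_ae (Filter.Eventually.of_forall fun y => h2 y),
    setIntegral_indicator measurableSet_Icc]
  have h3 : Set.Ioi (0:ℝ) ∩ Set.Icc D (2*D) = Set.Icc D (2*D) :=
    Set.inter_eq_right.mpr (fun r hr => lt_of_lt_of_le hD hr.1)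
  rw [h3, integral_Icc_eq_integral_Ioc]

lemma memL2_of_cont (a b : ℝ) (f : ℝ → ℝ) (hf : Continuous f) :
    MemLp f (ENNReal.ofReal 2) (volume.restrict (Set.Ioc a b)) := by
  haveI : IsFiniteMeasure (volume.restrict (Set.Ioc a b)) :=
    ⟨by rw [Measure.restrict_apply_univ]; exact measure_Ioc_lt_top⟩
  obtain ⟨C, hC⟩ := (isCompact_Icc (a := a) (b := b)).exists_bound_of_continuousOn
    hf.continuousOn
  refine MemLp.of_bound hf.aestronglyMeasurable C ?_
  filter_upwards [ae_restrict_mem measurableSet_Ioc] with x hx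
  exact hC x (Set.Ioc_subset_Icc_self hx)

/-- Let `u : ℝ^N → ℂ` be smooth and radially symmetric and let
`𝒞 = {D ≤ |x| ≤ 2D}`. If `x₀ ∈ 𝒞` attains the maximum of `|u|` on `𝒞` and there is
`y ∈ 𝒞` with `|u(y)| ≤ |u(x₀)|/2`, then
`‖u‖_{L^∞(𝒞)}² ≤ C D^{-(N-1)} ‖∇u‖_{L²(𝒞)} ‖u‖_{L²(𝒞)}` for a constant `C = C(N)`. -/
theorem stmt4 (N : ℕ) (hN : 3 ≤ N) :
    ∃ C > 0, ∀ (D : ℝ), 0 < D → ∀ (u : EuclideanSpace ℝ (Fin N) → ℂ),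
      ContDiff ℝ (⊤ : ℕ∞) u →
      (∀ x y : EuclideanSpace ℝ (Fin N), ‖x‖ = ‖y‖ → u x = u y) →
      ∀ x₀ ∈ {x : EuclideanSpace ℝ (Fin N) | D ≤ ‖x‖ ∧ ‖x‖ ≤ 2 * D},
      (∀ y ∈ {x : EuclideanSpace ℝ (Fin N) | D ≤ ‖x‖ ∧ ‖x‖ ≤ 2 * D}, ‖u y‖ ≤ ‖u x₀‖) →
      (∃ y ∈ {x : EuclideanSpace ℝ (Fin N) | D ≤ ‖x‖ ∧ ‖x‖ ≤ 2 * D}, ‖u y‖ ≤ ‖u x₀‖ / 2) →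
      ‖u x₀‖ ^ (2 : ℝ) ≤ C * D ^ (-((N : ℝ) - 1)) *
        ((∫ x in {x : EuclideanSpace ℝ (Fin N) | D ≤ ‖x‖ ∧ ‖x‖ ≤ 2 * D}, ‖fderiv ℝ u x‖ ^ (2 : ℝ)) ^ ((1 : ℝ) / 2)) *
        ((∫ x in {x : EuclideanSpace ℝ (Fin N) | D ≤ ‖x‖ ∧ ‖x‖ ≤ 2 * D}, ‖u x‖ ^ (2 : ℝ)) ^ ((1 : ℝ) / 2)) := by
  have hballpos : 0 < (volume (Metric.ball (0 : EuclideanSpace ℝ (Fin N)) 1)).toReal :=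
    ENNReal.toReal_pos (measure_ball_pos _ _ one_pos).ne' measure_ball_lt_top.ne
  set ω : ℝ := N * (volume (Metric.ball (0 : EuclideanSpace ℝ (Fin N)) 1)).toReal with hωdef
  have hωpos : 0 < ω := mul_pos (by exact_mod_cast Nat.cast_pos.mpr (by omega)) hballpos
  refine ⟨8 / (3 * ω), by positivity, ?_⟩
  intro D hD u hsmooth hrad x₀ hx₀ hmax hex
  obtain ⟨y, hy, hy2⟩ := hex
  have hud : Differentiable ℝ u := hsmooth.differentiable (by simp)
  have hucont : Continuous u := hud.continuous
  have hfc : Continuous (fderiv ℝ u) := hsmooth.continuous_fderiv (by simp)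
  have h22 : ∀ a : ℝ, a ^ (2:ℝ) = a ^ 2 := fun a => by
    rw [← Real.rpow_natCast a 2]; norm_num
  have h𝒞meas : MeasurableSet {x : EuclideanSpace ℝ (Fin N) | D ≤ ‖x‖ ∧ ‖x‖ ≤ 2 * D} := by
    have : {x : EuclideanSpace ℝ (Fin N) | D ≤ ‖x‖ ∧ ‖x‖ ≤ 2 * D} =
        (fun x : EuclideanSpace ℝ (Fin N) => ‖x‖) ⁻¹' Set.Icc D (2 * D) := rfl
    rw [this]; exact measurable_norm measurableSet_Icc
  -- the ray direction
  set e : EuclideanSpace ℝ (Fin N) := EuclideanSpace.single (⟨0, by omega⟩ : Fin N) (1:ℝ) with hedef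
  have he : ‖e‖ = 1 := by rw [hedef, EuclideanSpace.norm_single]; exact norm_one
  have hnsmul : ∀ r : ℝ, 0 ≤ r → ‖r • e‖ = r := fun r hr => by
    rw [norm_smul, he, mul_one, Real.norm_eq_abs, abs_of_nonneg hr]
  set w : ℝ → ℂ := fun r => u (r • e) with hwdef
  have hw_eq : ∀ x : EuclideanSpace ℝ (Fin N), w ‖x‖ = u x :=
    fun x => hrad _ x (hnsmul _ (norm_nonneg x))
  set G : ℝ → ℝ := fun r => ‖fderiv ℝ u (r • e)‖ with hGdef
  have hG_eq : ∀ x : EuclideanSpace ℝ (Fin N), G ‖x‖ = ‖fderiv ℝ u x‖ :=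
    fun x => radial_fderiv_norm u hud hrad (hnsmul _ (norm_nonneg x))
  set w' : ℝ → ℂ := fun r => (fderiv ℝ u (r • e)) e with hw'def
  have hcsm : Continuous (fun r : ℝ => r • e) := continuous_id.smul continuous_const
  have hw_cont : Continuous w := hucont.comp hcsm
  have hw'_cont : Continuous w' := (hfc.comp hcsm).clm_apply continuous_const
  have hG_cont : Continuous G := (hfc.comp hcsm).norm
  have hw : ∀ r : ℝ, HasDerivAt w (w' r) r := by
    intro r
    have h1 : HasDerivAt (fun s : ℝ => s • e) e r := by
      simpa using (hasDerivAt_id r).smul_const e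
    exact (hud (r • e)).hasFDerivAt.comp_hasDerivAt r h1
  set r₀ : ℝ := ‖x₀‖ with hr₀def
  set r₁ : ℝ := ‖y‖ with hr₁def
  set M : ℝ := ‖u x₀‖ with hMdef
  have hr₀ : D ≤ r₀ ∧ r₀ ≤ 2 * D := hx₀
  have hr₁ : D ≤ r₁ ∧ r₁ ≤ 2 * D := hy
  -- the squared modulus along the ray and its derivative
  set g : ℝ → ℝ := fun r => (w r).re ^ 2 + (w r).im ^ 2 with hgdef
  have hgW : ∀ r, g r = ‖w r‖ ^ 2 := by
    intro r
    rw [hgdef]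
    rw [Complex.sq_norm, Complex.normSq_apply]
    ring
  set dg : ℝ → ℝ := fun r =>
    2 * (w r).re ^ 1 * (w' r).re + 2 * (w r).im ^ 1 * (w' r).im with hdgdef
  have hg : ∀ r : ℝ, HasDerivAt g (dg r) r := by
    intro r
    have ha : HasDerivAt (fun s => (w s).re) ((w' r).re) r :=
      Complex.reCLM.hasFDerivAt.comp_hasDerivAt r (hw r)
    have hb : HasDerivAt (fun s => (w s).im) ((w' r).im) r :=
      Complex.imCLM.hasFDerivAt.comp_hasDerivAt r (hw r)
    have := ((ha.pow 2).add (hb.pow 2))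
    have h' : HasDerivAt g _ r := this
    simpa [hdgdef] using h'
  have hdg_cont : Continuous dg := by
    rw [hdgdef]
    have h1 : Continuous fun r => (w r).re := Complex.continuous_re.comp hw_cont
    have h2 : Continuous fun r => (w r).im := Complex.continuous_im.comp hw_cont
    have h3 : Continuous fun r => (w' r).re := Complex.continuous_re.comp hw'_cont
    have h4 : Continuous fun r => (w' r).im := Complex.continuous_im.comp hw'_cont
    fun_prop
  have hdg_bound : ∀ r : ℝ, |dg r| ≤ 2 * (‖w r‖ * G r) := by
    intro r
    have h1 : dg r = 2 * ((starRingEnd ℂ) (w r) * w' r).re := by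
      rw [hdgdef]; simp [Complex.mul_re]; ring
    have h2 : |((starRingEnd ℂ) (w r) * w' r).re| ≤ ‖w r‖ * ‖w' r‖ := by
      calc |((starRingEnd ℂ) (w r) * w' r).re| ≤ ‖(starRingEnd ℂ) (w r) * w' r‖ :=
            Complex.abs_re_le_norm _
        _ = ‖(starRingEnd ℂ) (w r) * w' r‖ := rfl
        _ = ‖w r‖ * ‖w' r‖ := by rw [norm_mul, RCLike.norm_conj]
    have h3 : ‖w' r‖ ≤ G r := by
      calc ‖(fderiv ℝ u (r • e)) e‖ ≤ ‖fderiv ℝ u (r • e)‖ * ‖e‖ :=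
            ContinuousLinearMap.le_opNorm _ _
        _ = G r := by rw [he, mul_one, hGdef]
    rw [h1, abs_mul, abs_two]
    have h4 : |((starRingEnd ℂ) (w r) * w' r).re| ≤ ‖w r‖ * G r :=
      h2.trans (by gcongr)
    linarith
  -- FTC
  have hFTC : ∫ t in r₁..r₀, dg t = g r₀ - g r₁ :=
    intervalIntegral.integral_eq_sub_of_hasDerivAt (fun t _ => hg t)
      (hdg_cont.intervalIntegrable _ _)
  have hgr₀ : g r₀ = M ^ 2 := by rw [hgW, hr₀def, hw_eq x₀, hMdef]
  have hgr₁ : g r₁ ≤ M ^ 2 / 4 := by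
    rw [hgW, hr₁def, hw_eq y]
    have := pow_le_pow_left₀ (norm_nonneg (u y)) hy2 2
    calc ‖u y‖ ^ 2 ≤ (M / 2) ^ 2 := this
      _ = M ^ 2 / 4 := by ring
  have hMpos : 0 ≤ M := norm_nonneg _
  have h34 : 3 / 4 * M ^ 2 ≤ g r₀ - g r₁ := by
    rw [hgr₀]; linarith
  -- bound by integral over the full interval
  have h5 : g r₀ - g r₁ ≤ ∫ r in Set.Ioc D (2 * D), |dg r| := by
    have hsub : Set.uIoc r₁ r₀ ⊆ Set.Ioc D (2 * D) := by
      rw [Set.uIoc]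
      exact Set.Ioc_subset_Ioc (le_min hr₁.1 hr₀.1) (max_le hr₁.2 hr₀.2)
    calc g r₀ - g r₁ = ∫ t in r₁..r₀, dg t := hFTC.symm
      _ ≤ |∫ t in r₁..r₀, dg t| := le_abs_self _
      _ ≤ ∫ t in Set.uIoc r₁ r₀, |dg t| := by
          simpa [Real.norm_eq_abs] using
            intervalIntegral.norm_integral_le_integral_norm_uIoc
              (f := dg) (a := r₁) (b := r₀) (μ := volume)
      _ ≤ ∫ r in Set.Ioc D (2 * D), |dg r| := by
          apply setIntegral_mono_set (hdg_cont.abs.integrableOn_Ioc)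
            (Filter.Eventually.of_forall fun t => abs_nonneg _)
            (HasSubset.Subset.eventuallyLE hsub)
  have h6 : ∫ r in Set.Ioc D (2 * D), |dg r| ≤
      ∫ r in Set.Ioc D (2 * D), 2 * (‖w r‖ * G r) := by
    apply setIntegral_mono_on (hdg_cont.abs.integrableOn_Ioc)
      ((continuous_const.mul (hw_cont.norm.mul hG_cont)).integrableOn_Ioc)
      measurableSet_Ioc (fun r _ => hdg_bound r)
  -- insert the weight r^(N-1)
  set K : ℝ := D ^ (N - 1) with hKdef
  have hKpos : 0 < K := pow_pos hD _
  have h8 : ∫ r in Set.Ioc D (2 * D), ‖w r‖ * G r ≤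
      K⁻¹ * ∫ r in Set.Ioc D (2 * D), r ^ (N - 1) * (‖w r‖ * G r) := by
    rw [← integral_const_mul]
    apply setIntegral_mono_on ((hw_cont.norm.mul hG_cont).integrableOn_Ioc)
      ((continuous_const.mul ((continuous_pow _).mul
        (hw_cont.norm.mul hG_cont))).integrableOn_Ioc)
      measurableSet_Ioc
    intro r hr
    have hrD : D ≤ r := hr.1.le
    have hKr : K ≤ r ^ (N - 1) := by rw [hKdef]; exact pow_le_pow_left₀ hD.le hrD _
    have hwG : 0 ≤ ‖w r‖ * G r := mul_nonneg (norm_nonneg _) (norm_nonneg _)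
    calc ‖w r‖ * G r = K⁻¹ * (K * (‖w r‖ * G r)) := by field_simp
      _ ≤ K⁻¹ * (r ^ (N - 1) * (‖w r‖ * G r)) := by gcongr
  -- Cauchy-Schwarz with weight
  set I₁ : ℝ := ∫ r in Set.Ioc D (2 * D), r ^ (N - 1) * ‖w r‖ ^ 2 with hI₁def
  set I₂ : ℝ := ∫ r in Set.Ioc D (2 * D), r ^ (N - 1) * (G r) ^ 2 with hI₂def
  have hI₁nn : 0 ≤ I₁ := setIntegral_nonneg measurableSet_Ioc fun r hr => by
    have : (0:ℝ) ≤ r := (hD.trans_le hr.1.le).le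
    positivity
  have hI₂nn : 0 ≤ I₂ := setIntegral_nonneg measurableSet_Ioc fun r hr => by
    have : (0:ℝ) ≤ r := (hD.trans_le hr.1.le).le
    positivity
  have h9 : ∫ r in Set.Ioc D (2 * D), r ^ (N - 1) * (‖w r‖ * G r) ≤
      I₁ ^ ((1:ℝ)/2) * I₂ ^ ((1:ℝ)/2) := by
    set φ₁ : ℝ → ℝ := fun r => Real.sqrt (r ^ (N - 1)) * ‖w r‖ with hφ₁def
    set φ₂ : ℝ → ℝ := fun r => Real.sqrt (r ^ (N - 1)) * G r with hφ₂def
    have hφ₁c : Continuous φ₁ := (Real.continuous_sqrt.comp (continuous_pow _)).mul hw_cont.norm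
    have hφ₂c : Continuous φ₂ := (Real.continuous_sqrt.comp (continuous_pow _)).mul hG_cont
    have hstep : ∫ r in Set.Ioc D (2 * D), r ^ (N - 1) * (‖w r‖ * G r) =
        ∫ r in Set.Ioc D (2 * D), φ₁ r * φ₂ r := by
      apply setIntegral_congr_fun measurableSet_Ioc
      intro r hr
      have h0 : (0:ℝ) ≤ r ^ (N - 1) := pow_nonneg (hD.trans_le hr.1.le).le _
      simp only [hφ₁def, hφ₂def]
      rw [show Real.sqrt (r ^ (N-1)) * ‖w r‖ * (Real.sqrt (r ^ (N-1)) * G r) =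
        (Real.sqrt (r ^ (N-1)) * Real.sqrt (r ^ (N-1))) * (‖w r‖ * G r) from by ring,
        Real.mul_self_sqrt h0]
    have hpq : Real.HolderConjugate 2 2 := Real.HolderConjugate.two_two
    have hHolder := integral_mul_le_Lp_mul_Lq_of_nonneg hpq
      (f := φ₁) (g := φ₂) (μ := volume.restrict (Set.Ioc D (2 * D)))
      (Filter.Eventually.of_forall fun r => mul_nonneg (Real.sqrt_nonneg _) (norm_nonneg _))
      (Filter.Eventually.of_forall fun r => mul_nonneg (Real.sqrt_nonneg _) (norm_nonneg _))
      (memL2_of_cont _ _ _ hφ₁c) (memL2_of_cont _ _ _ hφ₂c)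
    have hsq₁ : ∫ r in Set.Ioc D (2 * D), φ₁ r ^ (2:ℝ) = I₁ := by
      rw [hI₁def]
      apply setIntegral_congr_fun measurableSet_Ioc
      intro r hr
      have h0 : (0:ℝ) ≤ r ^ (N - 1) := pow_nonneg (hD.trans_le hr.1.le).le _
      simp only [h22, hφ₁def]
      rw [mul_pow, Real.sq_sqrt h0]
    have hsq₂ : ∫ r in Set.Ioc D (2 * D), φ₂ r ^ (2:ℝ) = I₂ := by
      rw [hI₂def]
      apply setIntegral_congr_fun measurableSet_Ioc
      intro r hr
      have h0 : (0:ℝ) ≤ r ^ (N - 1) := pow_nonneg (hD.trans_le hr.1.le).le _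
      simp only [h22, hφ₂def]
      rw [mul_pow, Real.sq_sqrt h0]
    rw [hstep]
    calc ∫ r in Set.Ioc D (2 * D), φ₁ r * φ₂ r ≤
        (∫ r in Set.Ioc D (2 * D), φ₁ r ^ (2:ℝ)) ^ ((1:ℝ)/2) *
        (∫ r in Set.Ioc D (2 * D), φ₂ r ^ (2:ℝ)) ^ ((1:ℝ)/2) := hHolder
      _ = I₁ ^ ((1:ℝ)/2) * I₂ ^ ((1:ℝ)/2) := by rw [hsq₁, hsq₂]
  -- relate N-dimensional integrals with the 1D weighted ones
  have hB : ∫ x in {x : EuclideanSpace ℝ (Fin N) | D ≤ ‖x‖ ∧ ‖x‖ ≤ 2 * D},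
      ‖u x‖ ^ (2:ℝ) = ω * I₁ := by
    have hstep : ∫ x in {x : EuclideanSpace ℝ (Fin N) | D ≤ ‖x‖ ∧ ‖x‖ ≤ 2 * D},
        ‖u x‖ ^ (2:ℝ) = ∫ x in {x : EuclideanSpace ℝ (Fin N) | D ≤ ‖x‖ ∧ ‖x‖ ≤ 2 * D},
        (fun r => ‖w r‖ ^ 2) ‖x‖ := by
      apply setIntegral_congr_fun h𝒞meas
      intro x _
      simp only [h22]
      rw [hw_eq x]
    rw [hstep, polar_annulus N hN D hD (fun r => ‖w r‖ ^ 2)]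
  have hA : ∫ x in {x : EuclideanSpace ℝ (Fin N) | D ≤ ‖x‖ ∧ ‖x‖ ≤ 2 * D},
      ‖fderiv ℝ u x‖ ^ (2:ℝ) = ω * I₂ := by
    have hstep : ∫ x in {x : EuclideanSpace ℝ (Fin N) | D ≤ ‖x‖ ∧ ‖x‖ ≤ 2 * D},
        ‖fderiv ℝ u x‖ ^ (2:ℝ) = ∫ x in {x : EuclideanSpace ℝ (Fin N) | D ≤ ‖x‖ ∧ ‖x‖ ≤ 2 * D},
        (fun r => (G r) ^ 2) ‖x‖ := by
      apply setIntegral_congr_fun h𝒞meas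
      intro x _
      simp only [h22]
      rw [hG_eq x]
    rw [hstep, polar_annulus N hN D hD (fun r => G r ^ 2)]
  -- put everything together
  have hchain : 3 / 4 * M ^ 2 ≤ 2 * (K⁻¹ * (I₁ ^ ((1:ℝ)/2) * I₂ ^ ((1:ℝ)/2))) := by
    have c1 : ∫ r in Set.Ioc D (2 * D), 2 * (‖w r‖ * G r) =
        2 * ∫ r in Set.Ioc D (2 * D), ‖w r‖ * G r := integral_const_mul _ _
    have c2 : K⁻¹ * (∫ r in Set.Ioc D (2 * D), r ^ (N - 1) * (‖w r‖ * G r)) ≤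
        K⁻¹ * (I₁ ^ ((1:ℝ)/2) * I₂ ^ ((1:ℝ)/2)) := by gcongr
    have := h34.trans (h5.trans h6)
    rw [c1] at this
    have h8' := h8.trans c2
    linarith
  -- rewrite the goal
  rw [hA, hB]
  have hDpow : D ^ (-((N : ℝ) - 1)) = K⁻¹ := by
    have hc : ((N:ℝ) - 1) = ((N - 1 : ℕ) : ℝ) := by
      have : (1:ℕ) ≤ N := by omega
      push_cast [Nat.cast_sub this]
      ring
    rw [hc, Real.rpow_neg hD.le, Real.rpow_natCast, hKdef]
  rw [hDpow]
  have hωI₂ : (ω * I₂) ^ ((1:ℝ)/2) = ω ^ ((1:ℝ)/2) * I₂ ^ ((1:ℝ)/2) :=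
    Real.mul_rpow hωpos.le hI₂nn
  have hωI₁ : (ω * I₁) ^ ((1:ℝ)/2) = ω ^ ((1:ℝ)/2) * I₁ ^ ((1:ℝ)/2) :=
    Real.mul_rpow hωpos.le hI₁nn
  rw [hωI₂, hωI₁]
  have hωhalf : ω ^ ((1:ℝ)/2) * ω ^ ((1:ℝ)/2) = ω := by
    rw [← Real.rpow_add hωpos]
    norm_num
  rw [show ‖u x₀‖ ^ (2:ℝ) = M ^ 2 from by rw [h22, hMdef]]
  have hrhs : 8 / (3 * ω) * K⁻¹ * (ω ^ ((1:ℝ)/2) * I₂ ^ ((1:ℝ)/2)) *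
      (ω ^ ((1:ℝ)/2) * I₁ ^ ((1:ℝ)/2)) =
      8 / 3 * K⁻¹ * (I₁ ^ ((1:ℝ)/2) * I₂ ^ ((1:ℝ)/2)) := by
    calc 8 / (3 * ω) * K⁻¹ * (ω ^ ((1:ℝ)/2) * I₂ ^ ((1:ℝ)/2)) *
        (ω ^ ((1:ℝ)/2) * I₁ ^ ((1:ℝ)/2)) =
        8 / (3 * ω) * K⁻¹ * ((ω ^ ((1:ℝ)/2) * ω ^ ((1:ℝ)/2)) *
          (I₁ ^ ((1:ℝ)/2) * I₂ ^ ((1:ℝ)/2))) := by ring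
      _ = 8 / (3 * ω) * K⁻¹ * (ω * (I₁ ^ ((1:ℝ)/2) * I₂ ^ ((1:ℝ)/2))) := by rw [hωhalf]
      _ = 8 / 3 * K⁻¹ * (I₁ ^ ((1:ℝ)/2) * I₂ ^ ((1:ℝ)/2)) := by
          field_simp
  rw [hrhs]
  linarith
end

section
/- Let u : ℝ^N → ℂ be radially symmetric on the annulus 𝒞 = {D ≤ |x| ≤ 2D}. If |u(y)| > |u(x₀)|/2 for all y ∈ 𝒞 where x₀ maximizes |u| on 𝒞, then ∫_𝒞 |u|^{p+1} ≤ C D^{-2(1-s_c)} ρ^{(p+1)/2}, where ρ = D^{-2s_c} ∫_𝒞 |u|², for a constant C = C(N,p). -/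
open MeasureTheory Metric Module

/-!
On the annulus `𝒞` the modulus `|u|` is pinched between `M / 2` and `M = |u(x₀)|`, so
`∫_𝒞 |u|^{p+1} ≤ M^{p+1} |𝒞|` while `∫_𝒞 |u|² ≥ M² |𝒞| / 4`. Eliminating `M` gives the reverse
Hölder inequality `∫_𝒞 |u|^{p+1} ≤ 2^{p+1} |𝒞|^{1-(p+1)/2} (∫_𝒞 |u|²)^{(p+1)/2}`, and since
`|𝒞| = κ_N D^N` the powers of `D` agree with those of the claim by the scaling identity
`N(p+1)/2 - N - s_c(p+1) = 2(1 - s_c)`.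
-/

section Annulus

variable {E : Type*} [NormedAddCommGroup E]

def annulus (r R : ℝ) : Set E := {x | r ≤ ‖x‖ ∧ ‖x‖ ≤ R}

theorem annulus_eq_closedBall_sdiff_ball (r R : ℝ) :
    (annulus r R : Set E) = closedBall 0 R \ ball 0 r := by
  ext x
  simp [annulus, and_comm]

variable [MeasurableSpace E]

theorem measurableSet_annulus [OpensMeasurableSpace E] (r R : ℝ) :
    MeasurableSet (annulus r R : Set E) := by
  rw [annulus_eq_closedBall_sdiff_ball]
  exact measurableSet_closedBall.diff measurableSet_ball

theorem measure_annulus_lt_top [ProperSpace E] (μ : Measure E) [IsFiniteMeasureOnCompacts μ]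
    (r R : ℝ) : μ (annulus r R) < ⊤ := by
  rw [annulus_eq_closedBall_sdiff_ball]
  exact (measure_mono Set.sdiff_subset).trans_lt measure_closedBall_lt_top

variable [NormedSpace ℝ E] [BorelSpace E] [FiniteDimensional ℝ E]
  (μ : Measure E) [μ.IsAddHaarMeasure]

theorem addHaar_real_annulus [Nontrivial E] {r R : ℝ} (hr : 0 ≤ r) (hrR : r ≤ R) :
    μ.real (annulus r R) = (R ^ finrank ℝ E - r ^ finrank ℝ E) * μ.real (ball 0 1) := by
  rw [annulus_eq_closedBall_sdiff_ball,
    measureReal_sdiff (ball_subset_closedBall.trans (closedBall_subset_closedBall hrR))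
      measurableSet_ball measure_closedBall_lt_top.ne,
    ← Measure.addHaar_real_closedBall_eq_addHaar_real_ball μ 0 r,
    Measure.addHaar_real_closedBall μ _ (hr.trans hrR), Measure.addHaar_real_closedBall μ _ hr]
  ring

end Annulus

theorem setIntegral_norm_rpow_le_of_half_le {α F : Type*} [MeasurableSpace α]
    [NormedAddCommGroup F] {μ : Measure α} {s : Set α} {u : α → F} {M r : ℝ}
    (hs : MeasurableSet s) (hμs : μ s < ⊤) (hr : 0 < r) (hM : 0 ≤ M)
    (hle : ∀ x ∈ s, ‖u x‖ ≤ M) (hge : ∀ x ∈ s, M / 2 ≤ ‖u x‖) :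
    ∫ x in s, ‖u x‖ ^ r ∂μ ≤
      2 ^ r * μ.real s ^ (1 - r / 2) * (∫ x in s, ‖u x‖ ^ (2 : ℝ) ∂μ) ^ (r / 2) := by
  by_cases hmeas : AEMeasurable (fun x => ‖u x‖) (μ.restrict s)
  swap
  · have hnot : ¬ IntegrableOn (fun x => ‖u x‖ ^ r) s μ := fun h => hmeas <|
      (h.aemeasurable.pow_const r⁻¹).congr <| Filter.Eventually.of_forall fun x => by
        simp [← Real.rpow_mul (norm_nonneg _), hr.ne']
    rw [integral_undef hnot]
    positivity
  have hint2 : IntegrableOn (fun x => ‖u x‖ ^ (2 : ℝ)) s μ :=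
    (integrableOn_const (C := M ^ (2 : ℝ)) hμs.ne).mono'
      (hmeas.pow_const _).aestronglyMeasurable <| ae_restrict_of_forall_mem hs fun x hx => by
        rw [Real.norm_of_nonneg (by positivity)]
        exact Real.rpow_le_rpow (norm_nonneg _) (hle x hx) zero_le_two
  have hupper : ∫ x in s, ‖u x‖ ^ r ∂μ ≤ M ^ r * μ.real s := by
    refine (Real.le_norm_self _).trans (norm_setIntegral_le_of_norm_le_const hμs fun x hx => ?_)
    rw [Real.norm_of_nonneg (by positivity)]
    exact Real.rpow_le_rpow (norm_nonneg _) (hle x hx) hr.le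
  have hlower : (M / 2) ^ (2 : ℝ) * μ.real s ≤ ∫ x in s, ‖u x‖ ^ (2 : ℝ) ∂μ :=
    setIntegral_ge_of_const_le_real hs hμs.ne
      (fun x hx => Real.rpow_le_rpow (by positivity) (hge x hx) zero_le_two) hint2
  calc ∫ x in s, ‖u x‖ ^ r ∂μ ≤ M ^ r * μ.real s := hupper
    _ = 2 ^ r * μ.real s ^ (1 - r / 2) * ((M / 2) ^ (2 : ℝ) * μ.real s) ^ (r / 2) := by
      rw [Real.mul_rpow (by positivity) measureReal_nonneg, ← Real.rpow_mul (by positivity),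
        mul_div_cancel₀ r two_ne_zero, Real.div_rpow hM zero_le_two]
      have hsplit : μ.real s ^ (1 - r / 2) * μ.real s ^ (r / 2) = μ.real s := by
        rw [← Real.rpow_add' measureReal_nonneg (by norm_num), sub_add_cancel, Real.rpow_one]
      conv_lhs => rw [← hsplit]
      field_simp
    _ ≤ 2 ^ r * μ.real s ^ (1 - r / 2) * (∫ x in s, ‖u x‖ ^ (2 : ℝ) ∂μ) ^ (r / 2) := by
      gcongr

theorem scaling_exponent_identity (N p : ℝ) (hp : p ≠ 1) :
    N * (p + 1) / 2 - N - (N / 2 - 2 / (p - 1)) * (p + 1) = 2 * (1 - (N / 2 - 2 / (p - 1))) := by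
  have : p - 1 ≠ 0 := sub_ne_zero.2 hp
  field_simp
  ring

theorem mul_pow_rpow_one_sub_mul_rpow_eq {κ D X a b q : ℝ} (n : ℕ) (hκ : 0 ≤ κ) (hD : 0 < D)
    (hX : 0 ≤ X) (h : n * (1 - q) = a + b * q) :
    (κ * D ^ n) ^ (1 - q) * X ^ q = κ ^ (1 - q) * D ^ a * (D ^ b * X) ^ q := by
  rw [Real.mul_rpow hκ (by positivity), Real.mul_rpow (by positivity) hX, ← Real.rpow_natCast,
    ← Real.rpow_mul hD.le, ← Real.rpow_mul hD.le, h, Real.rpow_add hD]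
  ring

theorem stmt5_general (N : ℕ) (hN : 3 ≤ N) (p : ℝ) (hp1 : 1 + 4 / (N : ℝ) < p) :
    ∃ C > 0, ∀ (D : ℝ), 0 < D → ∀ (u : EuclideanSpace ℝ (Fin N) → ℂ),
      (∀ x y : EuclideanSpace ℝ (Fin N), ‖x‖ = ‖y‖ → u x = u y) →
      ∀ x₀ ∈ {x : EuclideanSpace ℝ (Fin N) | D ≤ ‖x‖ ∧ ‖x‖ ≤ 2 * D},
      (∀ y ∈ {x : EuclideanSpace ℝ (Fin N) | D ≤ ‖x‖ ∧ ‖x‖ ≤ 2 * D}, ‖u y‖ ≤ ‖u x₀‖) →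
      (∀ y ∈ {x : EuclideanSpace ℝ (Fin N) | D ≤ ‖x‖ ∧ ‖x‖ ≤ 2 * D}, ‖u x₀‖ / 2 < ‖u y‖) →
      (∫ x in {x : EuclideanSpace ℝ (Fin N) | D ≤ ‖x‖ ∧ ‖x‖ ≤ 2 * D}, ‖u x‖ ^ (p + 1))
        ≤ C * D ^ (-(2 * (1 - ((N : ℝ) / 2 - 2 / (p - 1))))) *
          ((D ^ (-(2 * ((N : ℝ) / 2 - 2 / (p - 1)))) *
            ∫ x in {x : EuclideanSpace ℝ (Fin N) | D ≤ ‖x‖ ∧ ‖x‖ ≤ 2 * D}, ‖u x‖ ^ (2 : ℝ)) ^ ((p + 1) / 2)) := by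
  have hp : 1 < p := by
    have : (0 : ℝ) < 4 / N := by positivity
    linarith
  have : Nontrivial (EuclideanSpace ℝ (Fin N)) :=
    Module.nontrivial_of_finrank_pos (R := ℝ) (by rw [finrank_euclideanSpace_fin]; omega)
  obtain ⟨κ, hκ, hvol⟩ : ∃ κ > 0, ∀ D > 0,
      volume.real (annulus D (2 * D) : Set (EuclideanSpace ℝ (Fin N))) = κ * D ^ N := by
    refine ⟨(2 ^ N - 1) * volume.real (ball (0 : EuclideanSpace ℝ (Fin N)) 1), ?_,
      fun D hD => ?_⟩
    · have : (1 : ℝ) < 2 ^ N := one_lt_pow₀ one_lt_two (by omega)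
      exact mul_pos (by linarith) (ENNReal.toReal_pos (measure_ball_pos _ _ one_pos).ne'
        measure_ball_lt_top.ne)
    · rw [addHaar_real_annulus _ hD.le (by linarith), finrank_euclideanSpace_fin]
      ring
  refine ⟨2 ^ (p + 1) * κ ^ (1 - (p + 1) / 2), by positivity,
    fun D hD u _ x₀ _ hmax hlow => ?_⟩
  calc ∫ x in annulus D (2 * D), ‖u x‖ ^ (p + 1)
      ≤ 2 ^ (p + 1) * (κ * D ^ N) ^ (1 - (p + 1) / 2) *
          (∫ x in annulus D (2 * D), ‖u x‖ ^ (2 : ℝ)) ^ ((p + 1) / 2) := by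
        rw [← hvol D hD]
        exact setIntegral_norm_rpow_le_of_half_le (measurableSet_annulus _ _)
          (measure_annulus_lt_top _ _ _) (by linarith) (norm_nonneg _) hmax
          fun y hy => (hlow y hy).le
    _ = _ := by
      rw [mul_assoc, mul_pow_rpow_one_sub_mul_rpow_eq N hκ.le hD (by positivity)
        (a := -(2 * (1 - ((N : ℝ) / 2 - 2 / (p - 1)))))
        (b := -(2 * ((N : ℝ) / 2 - 2 / (p - 1))))
        (by linear_combination -scaling_exponent_identity N p hp.ne')]
      simp only [mul_assoc]
      rfl

/-- Let `u : ℝ^N → ℂ` be radially symmetric on `𝒞 = {D ≤ |x| ≤ 2D}`.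
If `|u(y)| > |u(x₀)|/2` for all `y ∈ 𝒞`, where `x₀` maximizes `|u|` on `𝒞`, then
`∫_𝒞 |u|^{p+1} ≤ C D^{-2(1-s_c)} ρ^{(p+1)/2}` with `ρ = D^{-2 s_c} ∫_𝒞 |u|²`,
for a constant `C = C(N,p)`. -/
theorem stmt5 (N : ℕ) (hN : 3 ≤ N) (p : ℝ) (hp1 : 1 + 4 / (N : ℝ) < p)
    (hp2 : p < ((N : ℝ) + 2) / ((N : ℝ) - 2)) :
    ∃ C > 0, ∀ (D : ℝ), 0 < D → ∀ (u : EuclideanSpace ℝ (Fin N) → ℂ),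
      (∀ x y : EuclideanSpace ℝ (Fin N), ‖x‖ = ‖y‖ → u x = u y) →
      ∀ x₀ ∈ {x : EuclideanSpace ℝ (Fin N) | D ≤ ‖x‖ ∧ ‖x‖ ≤ 2 * D},
      (∀ y ∈ {x : EuclideanSpace ℝ (Fin N) | D ≤ ‖x‖ ∧ ‖x‖ ≤ 2 * D}, ‖u y‖ ≤ ‖u x₀‖) →
      (∀ y ∈ {x : EuclideanSpace ℝ (Fin N) | D ≤ ‖x‖ ∧ ‖x‖ ≤ 2 * D}, ‖u x₀‖ / 2 < ‖u y‖) →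
      (∫ x in {x : EuclideanSpace ℝ (Fin N) | D ≤ ‖x‖ ∧ ‖x‖ ≤ 2 * D}, ‖u x‖ ^ (p + 1))
        ≤ C * D ^ (-(2 * (1 - ((N : ℝ) / 2 - 2 / (p - 1))))) *
          ((D ^ (-(2 * ((N : ℝ) / 2 - 2 / (p - 1)))) *
            ∫ x in {x : EuclideanSpace ℝ (Fin N) | D ≤ ‖x‖ ∧ ‖x‖ ≤ 2 * D}, ‖u x‖ ^ (2 : ℝ)) ^ ((p + 1) / 2)) :=
  stmt5_general N hN p hp1
end
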